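/- Let a_1,…,a_H ≥ 0 with ∑_{k=1}^{H} a_k = 1, let b_1,…,b_H ∈ (ℝ_{>0})^M, let a*_1,…,a*_{H*} > 0 with ∑_{i=1}^{H*} a*_i = 1, and let b*_1,…,b*_{H*} ∈ (ℝ_{>0})^M be pairwise distinct. Define Inv_i := { k ∈ {1,…,H} : b_k = b*_i } for i ∈ {1,…,H*} and Inv_0 := {1,…,H} \ ⋃_{i=1}^{H*} Inv_i. Then ∑_{k=1}^{H} a_k b_k^{x} = ∑_{i=1}^{H*} a*_i (b*_i)^{x} holds for every x ∈ (ℤ_{≥0})^M if and only if for every i ∈ {1,…,H*} one has Inv_i ≠ ∅ and ∑_{k ∈ Inv_i} a_k = a*_i, and a_k = 0 for every k ∈ Inv_0. -/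

import Mathlib

open scoped Classical

/-!
Every `β : ι → K` gives a character `x ↦ ∏ m, β m ^ x m` of the monoid `ι → ℕ`, and distinct
points give distinct characters (evaluate at the unit vectors). By Dedekind's theorem distinct
characters are linearly independent, so `x ↦ ∑ k, a k * ∏ m, b k m ^ x m` determines the weight
`∑_{b k = β} a k` sitting at each point `β`. Since the `b*_i` are distinct, the weights of the
right-hand side are `a*_i` at `b*_i` and `0` elsewhere; with `a ≥ 0` and `a* > 0` this matching
of weights is exactly the stated condition on the sets `Inv_i`.
-/

open Finset Function

section MonomialCharacter

variable {ι R : Type*} [Fintype ι] [CommMonoid R]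

def monomialChar (β : ι → R) : Multiplicative (ι → ℕ) →* R where
  toFun x := ∏ m, β m ^ x.toAdd m
  map_one' := by simp
  map_mul' x y := by simp [pow_add, prod_mul_distrib]

@[simp]
lemma monomialChar_ofAdd (β : ι → R) (x : ι → ℕ) :
    monomialChar β (.ofAdd x) = ∏ m, β m ^ x m :=
  rfl

lemma monomialChar_ofAdd_single (β : ι → R) (m : ι) :
    monomialChar β (.ofAdd (Pi.single m 1)) = β m := by
  rw [monomialChar_ofAdd, prod_eq_single m (fun m' _ h => by simp [h]) (by simp)]
  simp

lemma monomialChar_injective :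
    Injective (monomialChar (ι := ι) (R := R)) := fun β γ h => funext fun m => by
  simpa only [monomialChar_ofAdd_single] using DFunLike.congr_fun h (.ofAdd (Pi.single m 1))

end MonomialCharacter

lemma linearIndependent_monomialChar {ι K : Type*} [Fintype ι] [Field K] :
    LinearIndependent K (fun β : ι → K => ⇑(monomialChar β)) :=
  (linearIndependent_monoidHom _ K).comp _ monomialChar_injective

section MixtureWeight

variable {ι κ κ' K : Type*} [Fintype ι] [Fintype κ] [Fintype κ'] [Field K]

/-- The mixture `x ↦ ∑ k, a k * ∏ m, b k m ^ x m` as a finitely supported combination of points. -/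
noncomputable def mixtureWeight (a : κ → K) (b : κ → ι → K) : (ι → K) →₀ K :=
  ∑ k, Finsupp.single (b k) (a k)

lemma mixtureWeight_apply [DecidableEq K] (a : κ → K) (b : κ → ι → K) (β : ι → K) :
    mixtureWeight a b β = ∑ k ∈ univ.filter (b · = β), a k := by
  simp [mixtureWeight, Finsupp.finsetSum_apply, Finsupp.single_apply, sum_filter]

lemma linearCombination_mixtureWeight_ofAdd (a : κ → K) (b : κ → ι → K) (x : ι → ℕ) :
    Finsupp.linearCombination K (fun β : ι → K => ⇑(monomialChar β)) (mixtureWeight a b)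
      (.ofAdd x) = ∑ k, a k * ∏ m, b k m ^ x m := by
  simp [mixtureWeight, Finsupp.linearCombination_single, Finset.sum_apply]

theorem sum_mul_prod_pow_eq_iff [DecidableEq K] (a : κ → K) (b : κ → ι → K) (a' : κ' → K)
    (b' : κ' → ι → K) :
    (∀ x : ι → ℕ, ∑ k, a k * ∏ m, b k m ^ x m = ∑ i, a' i * ∏ m, b' i m ^ x m) ↔
      ∀ β, ∑ k ∈ univ.filter (b · = β), a k = ∑ i ∈ univ.filter (b' · = β), a' i := by
  let χ := Finsupp.linearCombination K (fun β : ι → K => ⇑(monomialChar β))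
  calc _ ↔ χ (mixtureWeight a b) = χ (mixtureWeight a' b') := by
        simp only [funext_iff, Multiplicative.ofAdd.surjective.forall, χ,
          linearCombination_mixtureWeight_ofAdd]
    _ ↔ mixtureWeight a b = mixtureWeight a' b' :=
      linearIndependent_monomialChar.finsuppLinearCombination_injective.eq_iff
    _ ↔ _ := by simp only [Finsupp.ext_iff, mixtureWeight_apply]

end MixtureWeight

theorem sum_filter_eq_iff_of_injective {κ κ' α R : Type*} [Fintype κ] [Fintype κ']
    [DecidableEq α] [AddCommMonoid R] [PartialOrder R] [IsOrderedAddMonoid R]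
    {a : κ → R} {b : κ → α} {a' : κ' → R} {b' : κ' → α}
    (ha : ∀ k, 0 ≤ a k) (ha' : ∀ i, 0 < a' i) (hb' : Injective b') :
    (∀ β, ∑ k ∈ univ.filter (b · = β), a k = ∑ i ∈ univ.filter (b' · = β), a' i) ↔
      (∀ i, (univ.filter (b · = b' i)).Nonempty ∧ ∑ k ∈ univ.filter (b · = b' i), a k = a' i) ∧
        ∀ k, (∀ i, b k ≠ b' i) → a k = 0 := by
  have fiber_b' (i : κ') : ∑ j ∈ univ.filter (b' · = b' i), a' j = a' i := by
    simp [hb'.eq_iff, sum_filter]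
  constructor
  · intro h
    refine ⟨fun i => ?_, fun k hk => ?_⟩
    · have hi := (h (b' i)).trans (fiber_b' i)
      exact ⟨nonempty_of_sum_ne_zero (hi ▸ (ha' i).ne'), hi⟩
    · have h0 : ∑ j ∈ univ.filter (b · = b k), a j = 0 :=
        (h (b k)).trans (sum_eq_zero fun i hi => absurd (mem_filter.1 hi).2.symm (hk i))
      exact (sum_eq_zero_iff_of_nonneg fun j _ => ha j).1 h0 k (by simp)
  · rintro ⟨hfiber, hzero⟩ β
    by_cases hβ : ∃ i, b' i = β
    · obtain ⟨i, rfl⟩ := hβ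
      rw [(hfiber i).2, fiber_b']
    · push Not at hβ
      rw [sum_eq_zero fun i hi => absurd (mem_filter.1 hi).2 (hβ i),
        sum_eq_zero fun k hk => hzero k fun i hi => hβ i (hi.symm.trans (mem_filter.1 hk).2)]

theorem statement17_general (M H Hstar : ℕ)
    (a : Fin H → ℝ) (b : Fin H → Fin M → ℝ)
    (astar : Fin Hstar → ℝ) (bstar : Fin Hstar → Fin M → ℝ)
    (ha : ∀ k, 0 ≤ a k)
    (hastar : ∀ i, 0 < astar i)
    (hdist : Function.Injective bstar) :
    (∀ x : Fin M → ℕ,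
        ∑ k, a k * ∏ m, b k m ^ (x m) = ∑ i, astar i * ∏ m, bstar i m ^ (x m))
      ↔ ((∀ i, (Finset.univ.filter (fun k => b k = bstar i)).Nonempty ∧
              ∑ k ∈ Finset.univ.filter (fun k => b k = bstar i), a k = astar i) ∧
         (∀ k, (∀ i, b k ≠ bstar i) → a k = 0)) :=
  (sum_mul_prod_pow_eq_iff a b astar bstar).trans (sum_filter_eq_iff_of_injective ha hastar hdist)

theorem statement17 (M H Hstar : ℕ)
    (a : Fin H → ℝ) (b : Fin H → Fin M → ℝ)
    (astar : Fin Hstar → ℝ) (bstar : Fin Hstar → Fin M → ℝ)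
    (ha : ∀ k, 0 ≤ a k) (hasum : ∑ k, a k = 1)
    (hb : ∀ k m, 0 < b k m)
    (hastar : ∀ i, 0 < astar i) (hastarsum : ∑ i, astar i = 1)
    (hbstar : ∀ i m, 0 < bstar i m)
    (hdist : Function.Injective bstar) :
    (∀ x : Fin M → ℕ,
        ∑ k, a k * ∏ m, b k m ^ (x m) = ∑ i, astar i * ∏ m, bstar i m ^ (x m))
      ↔ ((∀ i, (Finset.univ.filter (fun k => b k = bstar i)).Nonempty ∧
              ∑ k ∈ Finset.univ.filter (fun k => b k = bstar i), a k = astar i) ∧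
         (∀ k, (∀ i, b k ≠ bstar i) → a k = 0)) :=
  statement17_general M H Hstar a b astar bstar ha hastar hdist
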